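/- arXiv:1304.0062 — 8 statements merged into one kernel-verified Lean document; each statement's English description precedes it below -/
import Mathlib

section
/- The JBPS problem is feasible if and only if the problem obtained by deleting all harvested-power constraints is feasible. That is, there exist beamformers v_1,…,v_K ∈ ℂ^{N_t} and ratios ρ_1,…,ρ_K ∈ (0,1) with SINR_k(v,ρ) ≥ γ_k and E_k(v,ρ) ≥ e_k for all k, if and only if there exist v_1,…,v_K ∈ ℂ^{N_t} and ρ_1,…,ρ_K ∈ (0,1) with SINR_k(v,ρ) ≥ γ_k for all k. -/
noncomputable section

open Finset

/-- SINR of user `k` with beamformers `v` and power-splitting ratios `ρ`. -/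
def SINR {K Nt : ℕ} (h : Fin K → EuclideanSpace ℂ (Fin Nt)) (σ2 δ2 : Fin K → ℝ)
    (v : Fin K → EuclideanSpace ℂ (Fin Nt)) (ρ : Fin K → ℝ) (k : Fin K) : ℝ :=
  ρ k * ‖(inner ℂ (h k) (v k) : ℂ)‖ ^ 2 /
    (ρ k * ∑ j ∈ univ.erase k, ‖(inner ℂ (h k) (v j) : ℂ)‖ ^ 2 + ρ k * σ2 k + δ2 k)

/-- Harvested power of user `k`. -/
def EH {K Nt : ℕ} (h : Fin K → EuclideanSpace ℂ (Fin Nt)) (σ2 ζ : Fin K → ℝ)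
    (v : Fin K → EuclideanSpace ℂ (Fin Nt)) (ρ : Fin K → ℝ) (k : Fin K) : ℝ :=
  ζ k * (1 - ρ k) * ((∑ j, ‖(inner ℂ (h k) (v j) : ℂ)‖ ^ 2) + σ2 k)

/-! Scaling all beamformers by a common real factor `t ≥ 1` multiplies every received power
`|h_kᴴ v_j|²` by `t²`. This can only raise each SINR, since the noise terms are not scaled,
while each harvested power grows like `t²` because a feasible SINR forces `h_kᴴ v_k ≠ 0`.
So a large enough multiple of an SINR-feasible point meets every energy target. -/

open Filter

lemma norm_inner_ofReal_smul_sq {E : Type*} [SeminormedAddCommGroup E] [InnerProductSpace ℂ E]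
    (x y : E) (t : ℝ) : ‖inner ℂ x ((t : ℂ) • y)‖ ^ 2 = t ^ 2 * ‖inner ℂ x y‖ ^ 2 := by
  rw [inner_smul_right, norm_mul, mul_pow, Complex.norm_real, Real.norm_eq_abs, sq_abs]

lemma div_add_le_mul_div_mul_add {x y z c : ℝ} (hx : 0 ≤ x) (hy : 0 ≤ y) (hz : 0 < z)
    (hc : 1 ≤ c) : x / (y + z) ≤ c * x / (c * y + z) := by
  rw [div_le_div_iff₀ (by positivity) (by positivity)]
  nlinarith [mul_nonneg hx hz.le]

section Scaling

variable {K Nt : ℕ} (h : Fin K → EuclideanSpace ℂ (Fin Nt)) (v : Fin K → EuclideanSpace ℂ (Fin Nt))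
  (ρ : Fin K → ℝ) (k : Fin K)

lemma inner_ne_zero_of_SINR_pos {σ2 δ2 : Fin K → ℝ} (hpos : 0 < SINR h σ2 δ2 v ρ k) :
    inner ℂ (h k) (v k) ≠ 0 := by
  intro h0
  simp [SINR, h0] at hpos

lemma SINR_le_SINR_smul {σ2 δ2 : Fin K → ℝ} (hρ : 0 ≤ ρ k) (hσ : 0 < σ2 k) (hδ : 0 < δ2 k)
    {t : ℝ} (ht : 1 ≤ t) :
    SINR h σ2 δ2 v ρ k ≤ SINR h σ2 δ2 ((t : ℂ) • v) ρ k := by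
  simp only [SINR, Pi.smul_apply, norm_inner_ofReal_smul_sq, ← mul_sum, add_assoc]
  rw [mul_left_comm, mul_left_comm (ρ k)]
  exact div_add_le_mul_div_mul_add (by positivity) (by positivity) (by positivity)
    (one_le_pow₀ ht)

lemma tendsto_EH_smul_atTop {σ2 ζ : Fin K → ℝ} (hζ : 0 < ζ k) (hρ : ρ k < 1)
    (hv : inner ℂ (h k) (v k) ≠ 0) :
    Tendsto (fun t : ℝ ↦ EH h σ2 ζ ((t : ℂ) • v) ρ k) atTop atTop := by
  simp only [EH, Pi.smul_apply, norm_inner_ofReal_smul_sq, ← mul_sum]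
  have hgain : 0 < ∑ j, ‖inner ℂ (h k) (v j)‖ ^ 2 :=
    sum_pos' (fun j _ ↦ by positivity) ⟨k, mem_univ k, by positivity⟩
  refine (tendsto_atTop_add_const_right _ _ ?_).const_mul_atTop (mul_pos hζ (sub_pos.2 hρ))
  exact (tendsto_pow_atTop two_ne_zero).atTop_mul_const hgain

end Scaling

theorem jbps_feasible_iff_sinr_feasible_general (K Nt : ℕ)
    (h : Fin K → EuclideanSpace ℂ (Fin Nt)) (σ2 δ2 ζ γ e : Fin K → ℝ)
    (hσ : ∀ k, 0 < σ2 k) (hδ : ∀ k, 0 < δ2 k)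
    (hζ : ∀ k, 0 < ζ k ∧ ζ k ≤ 1) (hγ : ∀ k, 0 < γ k) :
    (∃ (v : Fin K → EuclideanSpace ℂ (Fin Nt)) (ρ : Fin K → ℝ),
      (∀ k, 0 < ρ k ∧ ρ k < 1) ∧
      (∀ k, γ k ≤ SINR h σ2 δ2 v ρ k) ∧
      (∀ k, e k ≤ EH h σ2 ζ v ρ k)) ↔
    (∃ (v : Fin K → EuclideanSpace ℂ (Fin Nt)) (ρ : Fin K → ℝ),
      (∀ k, 0 < ρ k ∧ ρ k < 1) ∧
      (∀ k, γ k ≤ SINR h σ2 δ2 v ρ k)) := by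
  constructor
  · rintro ⟨v, ρ, hρ, hsinr, -⟩
    exact ⟨v, ρ, hρ, hsinr⟩
  · rintro ⟨v, ρ, hρ, hsinr⟩
    have hEH : ∀ᶠ t : ℝ in atTop, ∀ k, e k ≤ EH h σ2 ζ ((t : ℂ) • v) ρ k :=
      eventually_all.2 fun k ↦ (tendsto_EH_smul_atTop h v ρ k (hζ k).1 (hρ k).2
        (inner_ne_zero_of_SINR_pos h v ρ k ((hγ k).trans_le (hsinr k)))).eventually_ge_atTop _
    obtain ⟨t, ht, hte⟩ := ((eventually_ge_atTop 1).and hEH).exists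
    exact ⟨(t : ℂ) • v, ρ, hρ,
      fun k ↦ (hsinr k).trans (SINR_le_SINR_smul h v ρ k (hρ k).1.le (hσ k) (hδ k) ht), hte⟩

theorem jbps_feasible_iff_sinr_feasible (K Nt : ℕ) (hK : 1 ≤ K) (hNt : 1 ≤ Nt)
    (h : Fin K → EuclideanSpace ℂ (Fin Nt)) (σ2 δ2 ζ γ e : Fin K → ℝ)
    (hσ : ∀ k, 0 < σ2 k) (hδ : ∀ k, 0 < δ2 k)
    (hζ : ∀ k, 0 < ζ k ∧ ζ k ≤ 1) (hγ : ∀ k, 0 < γ k) (he : ∀ k, 0 < e k) :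
    (∃ (v : Fin K → EuclideanSpace ℂ (Fin Nt)) (ρ : Fin K → ℝ),
      (∀ k, 0 < ρ k ∧ ρ k < 1) ∧
      (∀ k, γ k ≤ SINR h σ2 δ2 v ρ k) ∧
      (∀ k, e k ≤ EH h σ2 ζ v ρ k)) ↔
    (∃ (v : Fin K → EuclideanSpace ℂ (Fin Nt)) (ρ : Fin K → ℝ),
      (∀ k, 0 < ρ k ∧ ρ k < 1) ∧
      (∀ k, γ k ≤ SINR h σ2 δ2 v ρ k)) :=
  jbps_feasible_iff_sinr_feasible_general K Nt h σ2 δ2 ζ γ e hσ hδ hζ hγ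
end
end

section
/- There exist v_1,…,v_K ∈ ℂ^{N_t} and ρ_1,…,ρ_K ∈ (0,1) with SINR_k(v,ρ) ≥ γ_k for all k, if and only if there exist v_1,…,v_K ∈ ℂ^{N_t} with |h_k^H v_k|² / (Σ_{j≠k} |h_k^H v_j|² + σ_k² + δ_k²) ≥ γ_k for all k. -/
/-! Power splitting only hurts: for `0 < ρ ≤ 1` the split SINR equals
`|hᴴv_k|² / (Σ_{j≠k} |hᴴv_j|² + σ² + δ²/ρ)`, which is at most the unsplit ratio. Conversely,
splitting with a common ratio `ρ` and scaling every beamformer by `ρ^{-1/2}` turns the split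
SINR into `|hᴴv_k|² / (Σ_{j≠k} |hᴴv_j|² + ρσ² + δ²)`, which is at least the unsplit ratio. -/

noncomputable section

open Finset

theorem norm_inner_smul_right_sq {𝕜 E : Type*} [RCLike 𝕜] [SeminormedAddCommGroup E]
    [InnerProductSpace 𝕜 E] (x y : E) (c : 𝕜) :
    ‖(inner 𝕜 x (c • y) : 𝕜)‖ ^ 2 = ‖c‖ ^ 2 * ‖(inner 𝕜 x y : 𝕜)‖ ^ 2 := by
  rw [inner_smul_right, norm_mul, mul_pow]

section

variable {K Nt : ℕ} (h : Fin K → EuclideanSpace ℂ (Fin Nt)) (σ2 δ2 : Fin K → ℝ)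
  (v : Fin K → EuclideanSpace ℂ (Fin Nt))

theorem SINR_smul (c : ℂ) (ρ : Fin K → ℝ) (k : Fin K) :
    SINR h σ2 δ2 (fun j => c • v j) ρ k =
      ρ k * ‖c‖ ^ 2 * ‖(inner ℂ (h k) (v k) : ℂ)‖ ^ 2 /
        (ρ k * ‖c‖ ^ 2 * ∑ j ∈ univ.erase k, ‖(inner ℂ (h k) (v j) : ℂ)‖ ^ 2 +
          ρ k * σ2 k + δ2 k) := by
  simp only [SINR, norm_inner_smul_right_sq, mul_sum, mul_assoc]

theorem SINR_inv_sqrt_smul_const {r : ℝ} (hr : 0 < r) (k : Fin K) :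
    SINR h σ2 δ2 (fun j => ((√r)⁻¹ : ℂ) • v j) (fun _ => r) k =
      ‖(inner ℂ (h k) (v k) : ℂ)‖ ^ 2 /
        (∑ j ∈ univ.erase k, ‖(inner ℂ (h k) (v j) : ℂ)‖ ^ 2 + r * σ2 k + δ2 k) := by
  have hc : r * ‖((√r)⁻¹ : ℂ)‖ ^ 2 = 1 := by
    rw [norm_inv, Complex.norm_real, Real.norm_of_nonneg (Real.sqrt_nonneg r), inv_pow,
      Real.sq_sqrt hr.le, mul_inv_cancel₀ hr.ne']
  rw [SINR_smul, hc, one_mul, one_mul]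

theorem SINR_le_of_le_one {ρ : Fin K → ℝ} {k : Fin K} (hρ0 : 0 < ρ k) (hρ1 : ρ k ≤ 1)
    (hσ : 0 ≤ σ2 k) (hδ : 0 < δ2 k) :
    SINR h σ2 δ2 v ρ k ≤
      ‖(inner ℂ (h k) (v k) : ℂ)‖ ^ 2 /
        (∑ j ∈ univ.erase k, ‖(inner ℂ (h k) (v j) : ℂ)‖ ^ 2 + σ2 k + δ2 k) := by
  set S := ‖(inner ℂ (h k) (v k) : ℂ)‖ ^ 2
  set I := ∑ j ∈ univ.erase k, ‖(inner ℂ (h k) (v j) : ℂ)‖ ^ 2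
  calc ρ k * S / (ρ k * I + ρ k * σ2 k + δ2 k)
      ≤ ρ k * S / (ρ k * (I + σ2 k + δ2 k)) := by
        refine div_le_div_of_nonneg_left (by positivity) (by positivity) ?_
        have : ρ k * δ2 k ≤ δ2 k := mul_le_of_le_one_left hδ.le hρ1
        linarith
    _ = S / (I + σ2 k + δ2 k) := mul_div_mul_left _ _ hρ0.ne'

end

theorem sinr_ps_feasible_iff_sinr_feasible_general (K Nt : ℕ)
    (h : Fin K → EuclideanSpace ℂ (Fin Nt)) (σ2 δ2 γ : Fin K → ℝ)
    (hσ : ∀ k, 0 < σ2 k) (hδ : ∀ k, 0 < δ2 k) :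
    (∃ (v : Fin K → EuclideanSpace ℂ (Fin Nt)) (ρ : Fin K → ℝ),
      (∀ k, 0 < ρ k ∧ ρ k < 1) ∧
      (∀ k, γ k ≤ SINR h σ2 δ2 v ρ k)) ↔
    (∃ v : Fin K → EuclideanSpace ℂ (Fin Nt),
      ∀ k, γ k ≤ ‖(inner ℂ (h k) (v k) : ℂ)‖ ^ 2 /
        ((∑ j ∈ univ.erase k, ‖(inner ℂ (h k) (v j) : ℂ)‖ ^ 2) + σ2 k + δ2 k)) := by
  constructor
  · rintro ⟨v, ρ, hρ, hγv⟩
    exact ⟨v, fun k =>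
      (hγv k).trans (SINR_le_of_le_one h σ2 δ2 v (hρ k).1 (hρ k).2.le (hσ k).le (hδ k))⟩
  · rintro ⟨v, hγv⟩
    refine ⟨fun j => ((√(1 / 2))⁻¹ : ℂ) • v j, fun _ => 1 / 2, fun _ => by norm_num, fun k => ?_⟩
    rw [SINR_inv_sqrt_smul_const h σ2 δ2 v (by norm_num)]
    have hσk := hσ k
    have hδk := hδ k
    exact (hγv k).trans (div_le_div_of_nonneg_left (by positivity) (by positivity) (by linarith))

theorem sinr_ps_feasible_iff_sinr_feasible (K Nt : ℕ) (hK : 1 ≤ K) (hNt : 1 ≤ Nt)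
    (h : Fin K → EuclideanSpace ℂ (Fin Nt)) (σ2 δ2 γ : Fin K → ℝ)
    (hσ : ∀ k, 0 < σ2 k) (hδ : ∀ k, 0 < δ2 k) (hγ : ∀ k, 0 < γ k) :
    (∃ (v : Fin K → EuclideanSpace ℂ (Fin Nt)) (ρ : Fin K → ℝ),
      (∀ k, 0 < ρ k ∧ ρ k < 1) ∧
      (∀ k, γ k ≤ SINR h σ2 δ2 v ρ k)) ↔
    (∃ v : Fin K → EuclideanSpace ℂ (Fin Nt),
      ∀ k, γ k ≤ ‖(inner ℂ (h k) (v k) : ℂ)‖ ^ 2 /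
        ((∑ j ∈ univ.erase k, ‖(inner ℂ (h k) (v j) : ℂ)‖ ^ 2) + σ2 k + δ2 k)) :=
  sinr_ps_feasible_iff_sinr_feasible_general K Nt h σ2 δ2 γ hσ hδ
end
end

section
/- Let ({X_k*}, {ρ_k*}) be an optimal solution of the SDR problem (a feasible point whose objective Σ_k Tr(X_k*) is minimal over the feasible set). Then both families of constraints are active at the optimum: for every k, (1/γ_k) h_k^H X_k* h_k − Σ_{j≠k} h_k^H X_j* h_k = σ_k² + δ_k²/ρ_k* and Σ_{j=1}^K h_k^H X_j* h_k = e_k/(ζ_k(1−ρ_k*)) − σ_k². -/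
/-!
At an optimum no constraint can be slack. If user `k`'s energy constraint is slack, raising `ρ k`
slightly keeps it satisfied and makes the SINR constraint slack, so it suffices to rule out a slack
SINR constraint. In that case move `t • X k` from beam `k` into every other beam and discard a
further `t ^ 2 • X k`. For each user `i ≠ k` part of the interference becomes signal, a gain of
`t * hᵢᴴ X k hᵢ` in SINR margin; it pays for lowering `ρ i` by an amount of order `t`, which lowers
the energy target by order `t`, more than the harvested power `t ^ 2 * hᵢᴴ X k hᵢ` that is lost.
User `k` keeps its constraints by continuity. For small `t > 0` this point is feasible and uses
`t ^ 2 * Tr X k > 0` less power.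
-/

noncomputable section

open Finset Matrix
open scoped ComplexOrder

/-- The (real) quadratic form `h^H X h` (its real part; it is real for Hermitian `X`). -/
def quadForm {Nt : ℕ} (h : Fin Nt → ℂ) (X : Matrix (Fin Nt) (Fin Nt) ℂ) : ℝ :=
  (star h ⬝ᵥ X *ᵥ h).re

/-- Feasibility of the semidefinite relaxation (SDR) of the JBPS problem. -/
def SDRFeasible {K Nt : ℕ} (h : Fin K → (Fin Nt → ℂ)) (σ2 δ2 ζ γ e : Fin K → ℝ)
    (X : Fin K → Matrix (Fin Nt) (Fin Nt) ℂ) (ρ : Fin K → ℝ) : Prop :=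
  (∀ k, (X k).PosSemidef) ∧ (∀ k, 0 < ρ k ∧ ρ k < 1) ∧
  (∀ k, σ2 k + δ2 k / ρ k ≤
      (1 / γ k) * quadForm (h k) (X k) - ∑ j ∈ univ.erase k, quadForm (h k) (X j)) ∧
  (∀ k, e k / (ζ k * (1 - ρ k)) - σ2 k ≤ ∑ j, quadForm (h k) (X j))

open Filter Topology

section quadForm

variable {Nt : ℕ} {g : Fin Nt → ℂ}

lemma quadForm_nonneg {X : Matrix (Fin Nt) (Fin Nt) ℂ} (hX : X.PosSemidef) : 0 ≤ quadForm g X :=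
  hX.re_dotProduct_nonneg g

lemma quadForm_add_ofReal_smul (X Y : Matrix (Fin Nt) (Fin Nt) ℂ) (a : ℝ) :
    quadForm g (X + (a : ℂ) • Y) = quadForm g X + a * quadForm g Y := by
  simp [quadForm, add_mulVec, smul_mulVec, dotProduct_add, dotProduct_smul]

lemma sum_quadForm_add_ofReal_smul {ι : Type*} (s : Finset ι) (X : ι → Matrix (Fin Nt) (Fin Nt) ℂ)
    (a : ι → ℝ) (Y : Matrix (Fin Nt) (Fin Nt) ℂ) :
    ∑ j ∈ s, quadForm g (X j + (a j : ℂ) • Y) =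
      ∑ j ∈ s, quadForm g (X j) + (∑ j ∈ s, a j) * quadForm g Y := by
  simp only [quadForm_add_ofReal_smul, sum_add_distrib, sum_mul]

lemma trace_re_pos_of_quadForm_pos {X : Matrix (Fin Nt) (Fin Nt) ℂ} (hX : X.PosSemidef)
    (hq : 0 < quadForm g X) : 0 < X.trace.re := by
  have hne : X.trace ≠ 0 := by
    rw [Ne, hX.trace_eq_zero_iff]
    rintro rfl
    simp [quadForm] at hq
  exact (Complex.pos_iff.mp (lt_of_le_of_ne hX.trace_nonneg hne.symm)).1

end quadForm

lemma Continuous.eventually_nhdsGT_zero_lt {f : ℝ → ℝ} (hf : Continuous f) {u : ℝ}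
    (h0 : f 0 < u) : ∀ᶠ t in 𝓝[>] 0, f t < u :=
  ((hf.tendsto 0).eventually_lt_const h0).filter_mono nhdsWithin_le_nhds

lemma eventually_nhdsGT_zero_pos_and_mul_le (c : ℝ) {u : ℝ} (hu : 0 < u) :
    ∀ᶠ t in 𝓝[>] 0, 0 < t ∧ c * t ≤ u :=
  eventually_mem_nhdsWithin.and <| ((continuous_const.mul continuous_id).eventually_nhdsGT_zero_lt
    (by simpa using hu)).mono fun _ => le_of_lt

lemma div_sub_le_div_add {δ ρ q t : ℝ} (hδ : 0 < δ) (hρ : 0 < ρ) (hq : 0 ≤ q) (ht : 0 ≤ t)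
    (hsmall : q * (ρ ^ 2 / (2 * δ)) * t ≤ ρ / 2) :
    δ / (ρ - q * (ρ ^ 2 / (2 * δ)) * t) ≤ δ / ρ + q * t := by
  set c := q * (ρ ^ 2 / (2 * δ)) * t with hc
  have hδc : δ / ρ * c = q * ρ * t / 2 := by rw [hc]; field_simp
  rw [div_le_iff₀ (by linarith), add_mul, mul_sub, div_mul_cancel₀ _ hρ.ne', hδc]
  nlinarith [mul_le_mul_of_nonneg_left hsmall (mul_nonneg hq ht)]

lemma div_add_sq_mul_le {e ζ ρ q κ t : ℝ} (hζ : 0 < ζ) (hρ : ρ < 1) (hq : 0 ≤ q) (hκ : 0 ≤ κ)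
    (ht : 0 ≤ t) (hsmall : t * (ζ * (1 - ρ) * (1 - ρ + q * κ * t)) ≤ e * κ) :
    e / (ζ * (1 - (ρ - q * κ * t))) + t ^ 2 * q ≤ e / (ζ * (1 - ρ)) := by
  have ha : 0 < 1 - ρ := by linarith
  have hb : 0 < 1 - ρ + q * κ * t := by positivity
  rw [show 1 - (ρ - q * κ * t) = 1 - ρ + q * κ * t by ring, div_add' _ _ _ (by positivity),
    div_le_div_iff₀ (by positivity) (by positivity)]
  nlinarith [mul_le_mul_of_nonneg_left hsmall (mul_nonneg (mul_nonneg hq ht) hζ.le)]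

lemma exists_gt_div_one_sub_lt {e ζ σ E ρ : ℝ} (hζ : 0 < ζ) (hρ : ρ < 1)
    (hE : e / (ζ * (1 - ρ)) - σ < E) : ∃ r, ρ < r ∧ r < 1 ∧ e / (ζ * (1 - r)) - σ < E := by
  have hcont : ContinuousAt (fun r => e / (ζ * (1 - r)) - σ) ρ := by
    have : ζ * (1 - ρ) ≠ 0 := by have := sub_pos.2 hρ; positivity
    fun_prop (disch := assumption)
  obtain ⟨r, hr, ⟨hρr, hr1⟩⟩ :=
    ((hcont.eventually_lt continuousAt_const hE).filter_mono nhdsWithin_le_nhds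
      |>.and (Ioo_mem_nhdsGT hρ)).exists
  exact ⟨r, hρr, hr1, hr⟩

section transfer

variable {ι : Type*} [Fintype ι] [DecidableEq ι]

def transferCoeff (k : ι) (t : ℝ) (j : ι) : ℝ :=
  if j = k then -(#(univ.erase k) * t + t ^ 2) else t

variable {k : ι} {t : ℝ}

lemma transferCoeff_self : transferCoeff k t k = -(#(univ.erase k) * t + t ^ 2) := if_pos rfl

lemma transferCoeff_of_ne {j : ι} (hj : j ≠ k) : transferCoeff k t j = t := if_neg hj

lemma sum_erase_transferCoeff_self :
    ∑ j ∈ univ.erase k, transferCoeff k t j = #(univ.erase k) * t := by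
  rw [sum_congr rfl fun j hj => transferCoeff_of_ne (ne_of_mem_erase hj), sum_const, nsmul_eq_mul]

lemma sum_transferCoeff : ∑ j, transferCoeff k t j = -t ^ 2 := by
  rw [← add_sum_erase _ _ (mem_univ k), sum_erase_transferCoeff_self, transferCoeff_self]
  ring

lemma sum_erase_transferCoeff_of_ne {i : ι} (hi : i ≠ k) :
    ∑ j ∈ univ.erase i, transferCoeff k t j = -(t + t ^ 2) := by
  rw [sum_erase_eq_sub (mem_univ i), sum_transferCoeff, transferCoeff_of_ne hi]
  ring

def transferBeams {n : Type*} (X : ι → Matrix n n ℂ) (k : ι) (t : ℝ) (j : ι) : Matrix n n ℂ :=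
  X j + (transferCoeff k t j : ℂ) • X k

lemma trace_transferBeams {n : Type*} [Fintype n] (X : ι → Matrix n n ℂ) :
    (∑ j, (transferBeams X k t j).trace).re = (∑ j, (X j).trace).re - t ^ 2 * (X k).trace.re := by
  simp only [transferBeams, trace_add, trace_smul, smul_eq_mul, sum_add_distrib, ← sum_mul,
    ← Complex.ofReal_sum, sum_transferCoeff, Complex.add_re, Complex.re_ofReal_mul]
  ring

end transfer

section SDR

variable {K Nt : ℕ} {h : Fin K → Fin Nt → ℂ} {σ2 δ2 ζ γ e : Fin K → ℝ}
  {X : Fin K → Matrix (Fin Nt) (Fin Nt) ℂ} {ρ : Fin K → ℝ}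

lemma SDRFeasible.exists_sinr_slack (hfeas : SDRFeasible h σ2 δ2 ζ γ e X ρ) {k : Fin K}
    (hδ : 0 < δ2 k) (hζ : 0 < ζ k)
    (hE : e k / (ζ k * (1 - ρ k)) - σ2 k < ∑ j, quadForm (h k) (X j)) :
    ∃ ρ', SDRFeasible h σ2 δ2 ζ γ e X ρ' ∧ σ2 k + δ2 k / ρ' k <
      (1 / γ k) * quadForm (h k) (X k) - ∑ j ∈ univ.erase k, quadForm (h k) (X j) := by
  obtain ⟨hPSD, hρ, hS, hEn⟩ := hfeas
  obtain ⟨r, hρr, hr1, hEr⟩ := exists_gt_div_one_sub_lt hζ (hρ k).2 hE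
  have hSr : δ2 k / r < δ2 k / ρ k := div_lt_div_of_pos_left hδ (hρ k).1 hρr
  refine ⟨Function.update ρ k r, ⟨hPSD, fun i => ?_, fun i => ?_, fun i => ?_⟩, ?_⟩
  · rcases eq_or_ne i k with rfl | hik
    · rw [Function.update_self]
      exact ⟨(hρ i).1.trans hρr, hr1⟩
    · rw [Function.update_of_ne hik]
      exact hρ i
  · rcases eq_or_ne i k with rfl | hik
    · rw [Function.update_self]
      linarith [hS i]
    · rw [Function.update_of_ne hik]
      exact hS i
  · rcases eq_or_ne i k with rfl | hik
    · rw [Function.update_self]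
      exact hEr.le
    · rw [Function.update_of_ne hik]
      exact hEn i
  · rw [Function.update_self]
    linarith [hS k]

/-- The shift is chosen so that `δ2 i / ρ i` rises by at most `t * hᵢᴴ X k hᵢ`
(`div_sub_le_div_add`). -/
def lowerSplitRatios (h : Fin K → Fin Nt → ℂ) (δ2 : Fin K → ℝ)
    (X : Fin K → Matrix (Fin Nt) (Fin Nt) ℂ) (ρ : Fin K → ℝ) (k : Fin K) (t : ℝ) (i : Fin K) : ℝ :=
  ρ i - quadForm (h i) (X k) * (ρ i ^ 2 / (2 * δ2 i)) * t

lemma SDRFeasible.eventually_posSemidef_transferBeams (hfeas : SDRFeasible h σ2 δ2 ζ γ e X ρ)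
    (k i : Fin K) : ∀ᶠ t in 𝓝[>] 0, (transferBeams X k t i).PosSemidef := by
  rcases eq_or_ne i k with rfl | hik
  · have hsmall := (by fun_prop : Continuous fun t : ℝ => #(univ.erase i) * t + t ^ 2)
      |>.eventually_nhdsGT_zero_lt (u := 1) (by simp)
    filter_upwards [hsmall] with t ht
    have hself : transferBeams X i t i = ((1 + transferCoeff i t i : ℝ) : ℂ) • X i := by
      simp [transferBeams, add_smul]
    rw [hself]
    exact (hfeas.1 i).smul (Complex.zero_le_real.2 (by rw [transferCoeff_self]; linarith))
  · filter_upwards [self_mem_nhdsWithin] with t ht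
    rw [transferBeams, transferCoeff_of_ne hik]
    exact (hfeas.1 i).add ((hfeas.1 k).smul (Complex.zero_le_real.2 (le_of_lt ht)))

lemma SDRFeasible.eventually_lowerSplitRatios_mem (hfeas : SDRFeasible h σ2 δ2 ζ γ e X ρ)
    {i : Fin K} (hδ : 0 < δ2 i) (k : Fin K) :
    ∀ᶠ t in 𝓝[>] 0, 0 < lowerSplitRatios h δ2 X ρ k t i ∧ lowerSplitRatios h δ2 X ρ k t i < 1 := by
  obtain ⟨hρ0, hρ1⟩ := hfeas.2.1 i
  filter_upwards [eventually_nhdsGT_zero_pos_and_mul_le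
    (quadForm (h i) (X k) * (ρ i ^ 2 / (2 * δ2 i))) (half_pos hρ0)] with t ⟨ht, hsmall⟩
  have hq := quadForm_nonneg (hfeas.1 k) (g := h i)
  have hshift : 0 ≤ quadForm (h i) (X k) * (ρ i ^ 2 / (2 * δ2 i)) * t := by positivity
  constructor <;> simp only [lowerSplitRatios] <;> linarith

lemma SDRFeasible.eventually_sinr_transferBeams (hfeas : SDRFeasible h σ2 δ2 ζ γ e X ρ)
    {i k : Fin K} (hδ : 0 < δ2 i) (hγ : 0 < γ i)
    (hk : σ2 k + δ2 k / ρ k <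
      (1 / γ k) * quadForm (h k) (X k) - ∑ j ∈ univ.erase k, quadForm (h k) (X j)) :
    ∀ᶠ t in 𝓝[>] 0, σ2 i + δ2 i / lowerSplitRatios h δ2 X ρ k t i ≤
      (1 / γ i) * quadForm (h i) (transferBeams X k t i) -
        ∑ j ∈ univ.erase i, quadForm (h i) (transferBeams X k t j) := by
  obtain ⟨hPSD, hρ, hS, -⟩ := hfeas
  set q := quadForm (h i) (X k)
  have hq : 0 ≤ q := quadForm_nonneg (hPSD k)
  have hlhs : ∀ t, (1 / γ i) * quadForm (h i) (transferBeams X k t i) -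
      ∑ j ∈ univ.erase i, quadForm (h i) (transferBeams X k t j) =
      ((1 / γ i) * quadForm (h i) (X i) - ∑ j ∈ univ.erase i, quadForm (h i) (X j)) +
        (transferCoeff k t i / γ i - ∑ j ∈ univ.erase i, transferCoeff k t j) * q := by
    intro t
    simp only [transferBeams]
    rw [quadForm_add_ofReal_smul, sum_quadForm_add_ofReal_smul]
    ring
  have hmargin : ∀ᶠ t in 𝓝[>] 0,
      (t - transferCoeff k t i / γ i + ∑ j ∈ univ.erase i, transferCoeff k t j) * q ≤
        (1 / γ i) * quadForm (h i) (X i) - ∑ j ∈ univ.erase i, quadForm (h i) (X j) -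
          (σ2 i + δ2 i / ρ i) := by
    rcases eq_or_ne i k with rfl | hik
    · simp only [transferCoeff_self, sum_erase_transferCoeff_self]
      refine ((by fun_prop : Continuous fun t : ℝ =>
        (t - -(#(univ.erase i) * t + t ^ 2) / γ i + #(univ.erase i) * t) * q)
        |>.eventually_nhdsGT_zero_lt (by simpa using hk)).mono fun _ => le_of_lt
    · filter_upwards [self_mem_nhdsWithin] with t ht
      rw [transferCoeff_of_ne hik, sum_erase_transferCoeff_of_ne hik]
      have : 0 ≤ (t / γ i + t ^ 2) * q := by have := ht.out; positivity
      linarith [hS i]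
  filter_upwards [eventually_nhdsGT_zero_pos_and_mul_le (q * (ρ i ^ 2 / (2 * δ2 i)))
    (half_pos (hρ i).1), hmargin] with t ⟨ht, hsmall⟩ hm
  have := div_sub_le_div_add hδ (hρ i).1 hq ht.le hsmall
  rw [hlhs, lowerSplitRatios]
  linarith

lemma SDRFeasible.eventually_energy_transferBeams (hfeas : SDRFeasible h σ2 δ2 ζ γ e X ρ)
    {i : Fin K} (hδ : 0 < δ2 i) (hζ : 0 < ζ i) (he : 0 < e i) (k : Fin K) :
    ∀ᶠ t in 𝓝[>] 0, e i / (ζ i * (1 - lowerSplitRatios h δ2 X ρ k t i)) - σ2 i ≤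
      ∑ j, quadForm (h i) (transferBeams X k t j) := by
  obtain ⟨hPSD, hρ, -, hE⟩ := hfeas
  set q := quadForm (h i) (X k)
  set κ := ρ i ^ 2 / (2 * δ2 i)
  have hκ : 0 < κ := by have := (hρ i).1; positivity
  have hsmall := (by fun_prop : Continuous fun t => t * (ζ i * (1 - ρ i) * (1 - ρ i + q * κ * t)))
    |>.eventually_nhdsGT_zero_lt (u := e i * κ) (by simpa using mul_pos he hκ)
  filter_upwards [self_mem_nhdsWithin, hsmall] with t ht hsmall
  have := div_add_sq_mul_le hζ (hρ i).2 (quadForm_nonneg (hPSD k)) hκ.le (le_of_lt ht) hsmall.le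
  rw [lowerSplitRatios]
  simp only [transferBeams]
  rw [sum_quadForm_add_ofReal_smul, sum_transferCoeff]
  linarith [hE i]

lemma SDRFeasible.eventually_transfer (hfeas : SDRFeasible h σ2 δ2 ζ γ e X ρ)
    (hδ : ∀ i, 0 < δ2 i) (hζ : ∀ i, 0 < ζ i) (hγ : ∀ i, 0 < γ i) (he : ∀ i, 0 < e i) {k : Fin K}
    (hk : σ2 k + δ2 k / ρ k <
      (1 / γ k) * quadForm (h k) (X k) - ∑ j ∈ univ.erase k, quadForm (h k) (X j)) :
    ∀ᶠ t in 𝓝[>] 0,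
      SDRFeasible h σ2 δ2 ζ γ e (transferBeams X k t) (lowerSplitRatios h δ2 X ρ k t) :=
  (eventually_all.2 fun i => hfeas.eventually_posSemidef_transferBeams k i).and <|
    (eventually_all.2 fun i => hfeas.eventually_lowerSplitRatios_mem (hδ i) k).and <|
    (eventually_all.2 fun i => hfeas.eventually_sinr_transferBeams (hδ i) (hγ i) hk).and <|
    eventually_all.2 fun i => hfeas.eventually_energy_transferBeams (hδ i) (hζ i) (he i) k

lemma SDRFeasible.exists_trace_lt (hfeas : SDRFeasible h σ2 δ2 ζ γ e X ρ)
    (hδ : ∀ i, 0 < δ2 i) (hζ : ∀ i, 0 < ζ i) (hγ : ∀ i, 0 < γ i) (he : ∀ i, 0 < e i) {k : Fin K}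
    (hσ : 0 ≤ σ2 k)
    (hk : σ2 k + δ2 k / ρ k <
      (1 / γ k) * quadForm (h k) (X k) - ∑ j ∈ univ.erase k, quadForm (h k) (X j)) :
    ∃ X' ρ', SDRFeasible h σ2 δ2 ζ γ e X' ρ' ∧
      (∑ j, (X' j).trace).re < (∑ j, (X j).trace).re := by
  obtain ⟨t, hfeas', ht⟩ :=
    ((hfeas.eventually_transfer hδ hζ hγ he hk).and self_mem_nhdsWithin).exists
  refine ⟨_, _, hfeas', ?_⟩
  have hq : 0 < quadForm (h k) (X k) := by
    have hsignal : 0 < (1 / γ k) * quadForm (h k) (X k) := by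
      have := div_pos (hδ k) (hfeas.2.1 k).1
      have := sum_nonneg fun j (_ : j ∈ univ.erase k) => quadForm_nonneg (hfeas.1 j) (g := h k)
      linarith
    exact pos_of_mul_pos_right hsignal (one_div_pos.2 (hγ k)).le
  have := trace_re_pos_of_quadForm_pos (hfeas.1 k) hq
  rw [trace_transferBeams]
  linarith [mul_pos (pow_pos ht 2) this]

end SDR

theorem sdr_constraints_active_at_optimum_general (K Nt : ℕ)
    (h : Fin K → (Fin Nt → ℂ)) (σ2 δ2 ζ γ e : Fin K → ℝ)
    (hσ : ∀ k, 0 < σ2 k) (hδ : ∀ k, 0 < δ2 k)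
    (hζ : ∀ k, 0 < ζ k ∧ ζ k ≤ 1) (hγ : ∀ k, 0 < γ k) (he : ∀ k, 0 < e k)
    (X : Fin K → Matrix (Fin Nt) (Fin Nt) ℂ) (ρ : Fin K → ℝ)
    (hfeas : SDRFeasible h σ2 δ2 ζ γ e X ρ)
    (hopt : ∀ (X' : Fin K → Matrix (Fin Nt) (Fin Nt) ℂ) (ρ' : Fin K → ℝ),
      SDRFeasible h σ2 δ2 ζ γ e X' ρ' →
      (∑ k, (X k).trace).re ≤ (∑ k, (X' k).trace).re) :
    ∀ k, (1 / γ k) * quadForm (h k) (X k) - ∑ j ∈ univ.erase k, quadForm (h k) (X j)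
        = σ2 k + δ2 k / ρ k ∧
      (∑ j, quadForm (h k) (X j)) = e k / (ζ k * (1 - ρ k)) - σ2 k := by
  intro k
  have no_sinr_slack : ∀ ρ', SDRFeasible h σ2 δ2 ζ γ e X ρ' → ¬ σ2 k + δ2 k / ρ' k <
      (1 / γ k) * quadForm (h k) (X k) - ∑ j ∈ univ.erase k, quadForm (h k) (X j) := by
    intro ρ' hfeas' hslack
    obtain ⟨X', ρ'', hfeas'', hlt⟩ :=
      hfeas'.exists_trace_lt hδ (fun i => (hζ i).1) hγ he (hσ k).le hslack
    exact (hopt X' ρ'' hfeas'').not_gt hlt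
  refine ⟨le_antisymm (not_lt.1 (no_sinr_slack ρ hfeas)) (hfeas.2.2.1 k),
    le_antisymm (not_lt.1 fun hE => ?_) (hfeas.2.2.2 k)⟩
  obtain ⟨ρ', hfeas', hslack⟩ := hfeas.exists_sinr_slack (hδ k) (hζ k).1 hE
  exact no_sinr_slack ρ' hfeas' hslack

theorem sdr_constraints_active_at_optimum (K Nt : ℕ) (hK : 1 ≤ K) (hNt : 1 ≤ Nt)
    (h : Fin K → (Fin Nt → ℂ)) (σ2 δ2 ζ γ e : Fin K → ℝ)
    (hσ : ∀ k, 0 < σ2 k) (hδ : ∀ k, 0 < δ2 k)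
    (hζ : ∀ k, 0 < ζ k ∧ ζ k ≤ 1) (hγ : ∀ k, 0 < γ k) (he : ∀ k, 0 < e k)
    (X : Fin K → Matrix (Fin Nt) (Fin Nt) ℂ) (ρ : Fin K → ℝ)
    (hfeas : SDRFeasible h σ2 δ2 ζ γ e X ρ)
    (hopt : ∀ (X' : Fin K → Matrix (Fin Nt) (Fin Nt) ℂ) (ρ' : Fin K → ℝ),
      SDRFeasible h σ2 δ2 ζ γ e X' ρ' →
      (∑ k, (X k).trace).re ≤ (∑ k, (X' k).trace).re) :
    ∀ k, (1 / γ k) * quadForm (h k) (X k) - ∑ j ∈ univ.erase k, quadForm (h k) (X j)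
        = σ2 k + δ2 k / ρ k ∧
      (∑ j, quadForm (h k) (X j)) = e k / (ζ k * (1 - ρ k)) - σ2 k :=
  sdr_constraints_active_at_optimum_general K Nt h σ2 δ2 ζ γ e hσ hδ hζ hγ he X ρ hfeas hopt
end
end

section
/- Assume K ≤ N_t and P_k h_k ≠ 0 for every k, where P_k is the orthogonal projection of ℂ^{N_t} onto the orthogonal complement of span{h_j : j ≠ k}. Define α_k = e_k/(ζ_k(γ_k+1)σ_k²), β_k = γ_k δ_k²/((γ_k+1)σ_k²), ρ̄_k* = (−(α_k+β_k−1) + √((α_k+β_k−1)² + 4β_k))/2, and v̄_k* = √(γ_k(σ_k² + δ_k²/ρ̄_k*)) · P_k h_k / ‖P_k h_k‖². Then ({v̄_k*}, {ρ̄_k*}) is an optimal solution of the ZF problem: it is feasible and Σ_k ‖v̄_k*‖² ≤ Σ_k ‖v_k‖² for every feasible ({v_k}, {ρ_k}) of the ZF problem. -/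
/-!
Zero-forcing decouples the users. For a zero-forcing `v`, `h_kᴴ v = (P_k h_k)ᴴ v`, so by
Cauchy–Schwarz `‖v‖² ≥ |h_kᴴ v|² / ‖P_k h_k‖²`, with equality along `P_k h_k`; it remains to
minimise the gain `|h_kᴴ v|²` over the splitting ratio. The SINR constraint reads
`|h_kᴴ v|² ≥ γ (σ² + δ²/ρ)`, which forces a large gain for small `ρ`, while the harvesting
constraint forces a large gain for `ρ` close to `1`. The ratio `ρ̄` is where both are tight:
substituting the SINR equality into the harvesting equality gives `ρ² + (α + β - 1) ρ - β = 0`.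
A feasible `ρ' ≤ ρ̄` needs gain at least `γ (σ² + δ²/ρ') ≥ γ (σ² + δ²/ρ̄)`, and a feasible
`ρ' > ρ̄` harvests less than `e` at any gain below `γ (σ² + δ²/ρ̄)`.
-/

noncomputable section

open Finset

/-- Orthogonal projection of `h k` onto the orthogonal complement of
`span {h j : j ≠ k}` (the zero-forcing direction of user `k`). -/
def zfProj {K Nt : ℕ} (h : Fin K → EuclideanSpace ℂ (Fin Nt)) (k : Fin K) :
    EuclideanSpace ℂ (Fin Nt) :=
  (Submodule.orthogonalProjectionOnto ((Submodule.span ℂ (h '' {j | j ≠ k}))ᗮ) (h k) :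
    EuclideanSpace ℂ (Fin Nt))

/-- Feasibility of the zero-forcing (ZF) problem. -/
def ZFFeasible {K Nt : ℕ} (h : Fin K → EuclideanSpace ℂ (Fin Nt))
    (σ2 δ2 ζ γ e : Fin K → ℝ)
    (v : Fin K → EuclideanSpace ℂ (Fin Nt)) (ρ : Fin K → ℝ) : Prop :=
  (∀ k, 0 < ρ k ∧ ρ k < 1) ∧
  (∀ k, γ k ≤ ρ k * ‖(inner ℂ (h k) (v k) : ℂ)‖ ^ 2 / (ρ k * σ2 k + δ2 k)) ∧
  (∀ k, e k ≤ ζ k * (1 - ρ k) * (‖(inner ℂ (h k) (v k) : ℂ)‖ ^ 2 + σ2 k)) ∧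
  (∀ k, ∀ j, j ≠ k → (inner ℂ (h j) (v k) : ℂ) = 0)

theorem quadratic_root_mem_Ioo {a b r : ℝ} (ha : 0 < a) (hb : 0 < b)
    (hr : r = (-(a + b - 1) + √((a + b - 1) ^ 2 + 4 * b)) / 2) : r ∈ Set.Ioo 0 1 := by
  have hlo : |a + b - 1| < √((a + b - 1) ^ 2 + 4 * b) := by
    rw [Real.lt_sqrt (abs_nonneg _), sq_abs]; linarith
  have hhi : √((a + b - 1) ^ 2 + 4 * b) < a + b + 1 := by
    rw [Real.sqrt_lt' (by linarith)]; nlinarith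
  constructor <;> linarith [le_abs_self (a + b - 1)]

theorem quadratic_root_eq {a b r : ℝ} (hb : 0 ≤ b)
    (hr : r = (-(a + b - 1) + √((a + b - 1) ^ 2 + 4 * b)) / 2) :
    a * r = (1 - r) * (r + b) := by
  have hdisc : discrim 1 (a + b - 1) (-b) =
      √((a + b - 1) ^ 2 + 4 * b) * √((a + b - 1) ^ 2 + 4 * b) := by
    rw [Real.mul_self_sqrt (by positivity), discrim]; ring
  have hroot := (quadratic_eq_zero_iff one_ne_zero hdisc r).2 (Or.inl (by rw [hr]; ring))
  linear_combination hroot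

section SingleUser

variable {σ2 δ2 ζ γ e : ℝ}

theorem le_sinr_iff {ρ Y : ℝ} (hρ : 0 < ρ) (hd : 0 < ρ * σ2 + δ2) :
    γ ≤ ρ * Y / (ρ * σ2 + δ2) ↔ γ * (σ2 + δ2 / ρ) ≤ Y := by
  have hfactor : γ * (ρ * σ2 + δ2) = ρ * (γ * (σ2 + δ2 / ρ)) := by field_simp
  rw [le_div_iff₀ hd, hfactor, mul_le_mul_iff_of_pos_left hρ]

theorem harvest_eq_of_quadratic_root {α β ρ : ℝ} (hσ : 0 < σ2) (hδ : 0 < δ2) (hζ : 0 < ζ)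
    (hγ : 0 < γ) (he : 0 < e)
    (hα : α = e / (ζ * (γ + 1) * σ2)) (hβ : β = γ * δ2 / ((γ + 1) * σ2))
    (hρ : ρ = (-(α + β - 1) + √((α + β - 1) ^ 2 + 4 * β)) / 2) :
    ρ ∈ Set.Ioo 0 1 ∧ e = ζ * (1 - ρ) * (γ * (σ2 + δ2 / ρ) + σ2) := by
  have hβ0 : 0 < β := hβ ▸ by positivity
  have hρ01 := quadratic_root_mem_Ioo (hα ▸ by positivity) hβ0 hρ
  refine ⟨hρ01, ?_⟩
  have hkey := quadratic_root_eq hβ0.le hρ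
  have : ρ ≠ 0 := hρ01.1.ne'
  rw [hα, hβ] at hkey
  field_simp at hkey ⊢
  linear_combination hkey

theorem gain_le_of_feasible {ρ ρ' Y : ℝ} (hσ : 0 < σ2) (hδ : 0 ≤ δ2) (hζ : 0 < ζ)
    (hγ : 0 ≤ γ) (hρ : 0 < ρ) (hρ' : ρ' ∈ Set.Ioo 0 1)
    (he : e = ζ * (1 - ρ) * (γ * (σ2 + δ2 / ρ) + σ2))
    (hsinr : γ * (σ2 + δ2 / ρ') ≤ Y) (hharv : e ≤ ζ * (1 - ρ') * (Y + σ2)) :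
    γ * (σ2 + δ2 / ρ) ≤ Y := by
  rcases le_or_gt ρ' ρ with hle | hlt
  · calc γ * (σ2 + δ2 / ρ) ≤ γ * (σ2 + δ2 / ρ') := by gcongr; exact hρ'.1
      _ ≤ Y := hsinr
  · have hT : 0 ≤ γ * (σ2 + δ2 / ρ) + σ2 := by positivity
    have hcmp : ζ * (1 - ρ') * (γ * (σ2 + δ2 / ρ) + σ2) ≤ ζ * (1 - ρ') * (Y + σ2) :=
      calc _ ≤ ζ * (1 - ρ) * (γ * (σ2 + δ2 / ρ) + σ2) := by gcongr
        _ ≤ _ := he ▸ hharv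
    linarith [le_of_mul_le_mul_left hcmp (mul_pos hζ (sub_pos.2 hρ'.2))]

end SingleUser

theorem Submodule.mem_orthogonal_span_image_iff {𝕜 E ι : Type*} [RCLike 𝕜]
    [NormedAddCommGroup E] [InnerProductSpace 𝕜 E] (f : ι → E) (s : Set ι) (w : E) :
    w ∈ (span 𝕜 (f '' s))ᗮ ↔ ∀ i ∈ s, inner 𝕜 (f i) w = 0 := by
  refine ⟨fun hw i hi => hw _ (subset_span ⟨i, hi, rfl⟩), fun hw u hu => ?_⟩
  induction hu using span_induction with
  | mem x hx => obtain ⟨i, hi, rfl⟩ := hx; exact hw i hi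
  | zero => exact inner_zero_left w
  | add x y _ _ hx hy => rw [inner_add_left, hx, hy, add_zero]
  | smul a x _ hx => rw [inner_smul_left, hx, mul_zero]

theorem norm_sqrt_div_norm_sq_smul_sq {E : Type*} [NormedAddCommGroup E] [NormedSpace ℝ E]
    {p : E} (hp : p ≠ 0) {T : ℝ} (hT : 0 ≤ T) : ‖(√T / ‖p‖ ^ 2) • p‖ ^ 2 = T / ‖p‖ ^ 2 := by
  have : ‖p‖ ≠ 0 := norm_ne_zero_iff.2 hp
  rw [norm_smul, mul_pow, Real.norm_eq_abs, sq_abs, div_pow, Real.sq_sqrt hT]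
  field_simp

section ZeroForcing

variable {K Nt : ℕ} (h : Fin K → EuclideanSpace ℂ (Fin Nt))

theorem inner_zfProj_eq_zero {j k : Fin K} (hjk : j ≠ k) : inner ℂ (h j) (zfProj h k) = 0 :=
  (Submodule.mem_orthogonal_span_image_iff h _ _).1 (Submodule.coe_mem _) j hjk

theorem inner_zfProj_left {k : Fin K} {w : EuclideanSpace ℂ (Fin Nt)}
    (hw : ∀ j, j ≠ k → inner ℂ (h j) w = 0) : inner ℂ (zfProj h k) w = inner ℂ (h k) w :=
  Submodule.inner_orthogonalProjectionOnto_eq_of_mem_right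
    ⟨w, (Submodule.mem_orthogonal_span_image_iff h _ _).2 hw⟩ _

theorem inner_zfProj_eq_norm_sq (k : Fin K) :
    inner ℂ (h k) (zfProj h k) = (‖zfProj h k‖ ^ 2 : ℝ) := by
  rw [← inner_zfProj_left h fun j => inner_zfProj_eq_zero h, inner_self_eq_norm_sq_to_K]
  norm_cast

theorem norm_inner_sq_le_of_forall_inner_eq_zero {k : Fin K} {w : EuclideanSpace ℂ (Fin Nt)}
    (hw : ∀ j, j ≠ k → inner ℂ (h j) w = 0) :
    ‖inner ℂ (h k) w‖ ^ 2 ≤ ‖zfProj h k‖ ^ 2 * ‖w‖ ^ 2 := by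
  rw [← inner_zfProj_left h hw, ← mul_pow]
  gcongr
  exact norm_inner_le_norm _ _

theorem norm_inner_sqrt_div_norm_sq_smul_zfProj_sq {k : Fin K} (hk : zfProj h k ≠ 0) {T : ℝ}
    (hT : 0 ≤ T) : ‖inner ℂ (h k) ((√T / ‖zfProj h k‖ ^ 2 : ℝ) • zfProj h k)‖ ^ 2 = T := by
  have hp : ‖zfProj h k‖ ^ 2 ≠ 0 := by positivity
  rw [← Complex.coe_smul, inner_smul_right, inner_zfProj_eq_norm_sq, ← Complex.ofReal_mul,
    div_mul_cancel₀ _ hp, Complex.norm_real, Real.norm_eq_abs, sq_abs, Real.sq_sqrt hT]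

end ZeroForcing

theorem zf_closed_form_optimal_general (K Nt : ℕ)
    (h : Fin K → EuclideanSpace ℂ (Fin Nt)) (σ2 δ2 ζ γ e : Fin K → ℝ)
    (hσ : ∀ k, 0 < σ2 k) (hδ : ∀ k, 0 < δ2 k)
    (hζ : ∀ k, 0 < ζ k ∧ ζ k ≤ 1) (hγ : ∀ k, 0 < γ k) (he : ∀ k, 0 < e k)
    (hproj : ∀ k, zfProj h k ≠ 0)
    (α β ρ : Fin K → ℝ)
    (hα : ∀ k, α k = e k / (ζ k * (γ k + 1) * σ2 k))
    (hβ : ∀ k, β k = γ k * δ2 k / ((γ k + 1) * σ2 k))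
    (hρ : ∀ k, ρ k =
      (-(α k + β k - 1) + Real.sqrt ((α k + β k - 1) ^ 2 + 4 * β k)) / 2)
    (v : Fin K → EuclideanSpace ℂ (Fin Nt))
    (hv : ∀ k, v k =
      (Real.sqrt (γ k * (σ2 k + δ2 k / ρ k)) / ‖zfProj h k‖ ^ 2 : ℝ) • zfProj h k) :
    ZFFeasible h σ2 δ2 ζ γ e v ρ ∧
    ∀ (v' : Fin K → EuclideanSpace ℂ (Fin Nt)) (ρ' : Fin K → ℝ),
      ZFFeasible h σ2 δ2 ζ γ e v' ρ' → (∑ k, ‖v k‖ ^ 2) ≤ ∑ k, ‖v' k‖ ^ 2 := by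
  have hopt k :=
    harvest_eq_of_quadratic_root (hσ k) (hδ k) (hζ k).1 (hγ k) (he k) (hα k) (hβ k) (hρ k)
  have hT k : 0 ≤ γ k * (σ2 k + δ2 k / ρ k) := by
    have := (hopt k).1.1; have := hσ k; have := hδ k; have := hγ k; positivity
  have hden k {r : ℝ} (hr : 0 < r) : 0 < r * σ2 k + δ2 k := by
    have := hσ k; have := hδ k; positivity
  have hgain k : ‖inner ℂ (h k) (v k)‖ ^ 2 = γ k * (σ2 k + δ2 k / ρ k) :=
    hv k ▸ norm_inner_sqrt_div_norm_sq_smul_zfProj_sq h (hproj k) (hT k)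
  refine ⟨⟨fun k => (hopt k).1, fun k => ?_, fun k => ?_, fun k j hjk => ?_⟩, ?_⟩
  · rw [le_sinr_iff (hopt k).1.1 (hden k (hopt k).1.1), hgain k]
  · rw [hgain k, ← (hopt k).2]
  · rw [hv k, ← Complex.coe_smul, inner_smul_right, inner_zfProj_eq_zero h hjk, mul_zero]
  · rintro v' ρ' ⟨hρ', hsinr, hharv, hzf⟩
    refine sum_le_sum fun k _ => ?_
    rw [hv k, norm_sqrt_div_norm_sq_smul_sq (hproj k) (hT k),
      div_le_iff₀ (pow_pos (norm_pos_iff.2 (hproj k)) 2)]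
    calc γ k * (σ2 k + δ2 k / ρ k) ≤ ‖inner ℂ (h k) (v' k)‖ ^ 2 :=
          gain_le_of_feasible (hσ k) (hδ k).le (hζ k).1 (hγ k).le (hopt k).1.1 (hρ' k) (hopt k).2
            ((le_sinr_iff (hρ' k).1 (hden k (hρ' k).1)).1 (hsinr k)) (hharv k)
      _ ≤ ‖zfProj h k‖ ^ 2 * ‖v' k‖ ^ 2 := norm_inner_sq_le_of_forall_inner_eq_zero h (hzf k)
      _ = ‖v' k‖ ^ 2 * ‖zfProj h k‖ ^ 2 := mul_comm _ _

theorem zf_closed_form_optimal (K Nt : ℕ) (hKNt : K ≤ Nt)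
    (h : Fin K → EuclideanSpace ℂ (Fin Nt)) (σ2 δ2 ζ γ e : Fin K → ℝ)
    (hσ : ∀ k, 0 < σ2 k) (hδ : ∀ k, 0 < δ2 k)
    (hζ : ∀ k, 0 < ζ k ∧ ζ k ≤ 1) (hγ : ∀ k, 0 < γ k) (he : ∀ k, 0 < e k)
    (hproj : ∀ k, zfProj h k ≠ 0)
    (α β ρ : Fin K → ℝ)
    (hα : ∀ k, α k = e k / (ζ k * (γ k + 1) * σ2 k))
    (hβ : ∀ k, β k = γ k * δ2 k / ((γ k + 1) * σ2 k))
    (hρ : ∀ k, ρ k =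
      (-(α k + β k - 1) + Real.sqrt ((α k + β k - 1) ^ 2 + 4 * β k)) / 2)
    (v : Fin K → EuclideanSpace ℂ (Fin Nt))
    (hv : ∀ k, v k =
      (Real.sqrt (γ k * (σ2 k + δ2 k / ρ k)) / ‖zfProj h k‖ ^ 2 : ℝ) • zfProj h k) :
    ZFFeasible h σ2 δ2 ζ γ e v ρ ∧
    ∀ (v' : Fin K → EuclideanSpace ℂ (Fin Nt)) (ρ' : Fin K → ℝ),
      ZFFeasible h σ2 δ2 ζ γ e v' ρ' → (∑ k, ‖v k‖ ^ 2) ≤ ∑ k, ‖v' k‖ ^ 2 :=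
  zf_closed_form_optimal_general K Nt h σ2 δ2 ζ γ e hσ hδ hζ hγ he hproj α β ρ hα hβ hρ v hv
end
end

section
/- Consider the single-user ZF subproblem: minimize ‖v‖² over v ∈ ℂ^{N_t} and ρ subject to ρ|h^H v|²/(ρσ² + δ²) ≥ γ, ζ(1−ρ)(|h^H v|² + σ²) ≥ e, h_j^H v = 0 for all j in a given index set J, and 0 < ρ < 1, where γ, e, δ², ζ > 0, σ² ≥ 0, and the projection of h onto the orthogonal complement of span{h_j : j ∈ J} is nonzero. Then at any optimal solution (v*, ρ*) both inequality constraints hold with equality: ρ*|h^H v*|²/(ρ*σ² + δ²) = γ and ζ(1−ρ*)(|h^H v*|² + σ²) = e. -/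
/-!
If one of the two constraints were slack at the optimum, moving the splitting ratio `ρ`
slightly (down if the SINR is slack, up if the harvested power is) would make both of them
slack, since the SINR increases and the harvested power decreases with `ρ`. Both constraints
depend on `v` only through `P = |hᴴ v|²`, so with both slack one could shrink `P` a little,
i.e. replace `v` by `t • v` with `0 < t < 1`, which keeps the zero-forcing constraints and has
smaller norm.
-/

noncomputable section

/-- Feasibility for the single-user zero-forcing subproblem. -/
def SUFeasible {Nt : ℕ} {ι : Type*} (h : EuclideanSpace ℂ (Fin Nt))
    (hj : ι → EuclideanSpace ℂ (Fin Nt)) (σ2 δ2 ζ γ e : ℝ)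
    (v : EuclideanSpace ℂ (Fin Nt)) (ρ : ℝ) : Prop :=
  0 < ρ ∧ ρ < 1 ∧
  γ ≤ ρ * ‖(inner ℂ h v : ℂ)‖ ^ 2 / (ρ * σ2 + δ2) ∧
  e ≤ ζ * (1 - ρ) * (‖(inner ℂ h v : ℂ)‖ ^ 2 + σ2) ∧
  ∀ j, (inner ℂ (hj j) v : ℂ) = 0

open Filter Topology Set

def splittingSINR (σ2 δ2 ρ P : ℝ) : ℝ := ρ * P / (ρ * σ2 + δ2)

def harvestedPower (ζ σ2 ρ P : ℝ) : ℝ := ζ * (1 - ρ) * (P + σ2)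

section PowerSplitting

variable {σ2 δ2 ζ γ e ρ P : ℝ}

theorem pos_of_le_splittingSINR (hγ : 0 < γ) (hP : 0 ≤ P) (hs : γ ≤ splittingSINR σ2 δ2 ρ P) :
    0 < P := by
  refine hP.lt_of_ne fun hP0 ↦ hγ.not_ge ?_
  simpa [splittingSINR, ← hP0] using hs

theorem splittingSINR_strictMonoOn (hσ : 0 ≤ σ2) (hδ : 0 < δ2) (hP : 0 < P) :
    StrictMonoOn (fun ρ ↦ splittingSINR σ2 δ2 ρ P) (Ici 0) := by
  intro a (ha : 0 ≤ a) b (hb : 0 ≤ b) hab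
  have hda : 0 < a * σ2 + δ2 := by positivity
  have hdb : 0 < b * σ2 + δ2 := by positivity
  simp only [splittingSINR]
  rw [div_lt_div_iff₀ hda hdb]
  nlinarith [mul_pos (mul_pos hP hδ) (sub_pos.mpr hab)]

theorem harvestedPower_strictAnti (hζ : 0 < ζ) (hP : 0 < P + σ2) :
    StrictAnti (fun ρ ↦ harvestedPower ζ σ2 ρ P) := by
  intro a b hab
  simp only [harvestedPower]
  nlinarith [mul_pos (mul_pos hζ hP) (sub_pos.mpr hab)]

theorem continuousAt_splittingSINR_ratio (hσ : 0 ≤ σ2) (hδ : 0 < δ2) (hρ : 0 ≤ ρ) :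
    ContinuousAt (fun ρ ↦ splittingSINR σ2 δ2 ρ P) ρ := by
  have hden : ρ * σ2 + δ2 ≠ 0 := by positivity
  unfold splittingSINR
  fun_prop (disch := exact hden)

theorem exists_slack_of_splittingSINR_slack (hσ : 0 ≤ σ2) (hδ : 0 < δ2) (hζ : 0 < ζ)
    (hP : 0 < P) (hρ0 : 0 < ρ) (hρ1 : ρ < 1) (hs : γ < splittingSINR σ2 δ2 ρ P)
    (he : e ≤ harvestedPower ζ σ2 ρ P) :
    ∃ ρ', 0 < ρ' ∧ ρ' < 1 ∧ γ < splittingSINR σ2 δ2 ρ' P ∧ e < harvestedPower ζ σ2 ρ' P := by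
  have hs_near : ∀ᶠ r in 𝓝 ρ, γ < splittingSINR σ2 δ2 r P :=
    (continuousAt_splittingSINR_ratio hσ hδ hρ0.le).eventually_const_lt hs
  obtain ⟨r, ⟨hsr, hr0⟩, hrρ⟩ :=
    (((hs_near.and (eventually_gt_nhds hρ0)).filter_mono nhdsWithin_le_nhds).and
      (self_mem_nhdsWithin (s := Iio ρ))).exists
  have hPσ : 0 < P + σ2 := by positivity
  exact ⟨r, hr0, hrρ.trans hρ1, hsr, he.trans_lt (harvestedPower_strictAnti hζ hPσ hrρ)⟩

theorem exists_slack_of_harvestedPower_slack (hσ : 0 ≤ σ2) (hδ : 0 < δ2)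
    (hP : 0 < P) (hρ0 : 0 < ρ) (hρ1 : ρ < 1) (hs : γ ≤ splittingSINR σ2 δ2 ρ P)
    (he : e < harvestedPower ζ σ2 ρ P) :
    ∃ ρ', 0 < ρ' ∧ ρ' < 1 ∧ γ < splittingSINR σ2 δ2 ρ' P ∧ e < harvestedPower ζ σ2 ρ' P := by
  have hcont : Continuous fun r ↦ harvestedPower ζ σ2 r P := by
    unfold harvestedPower
    fun_prop
  have he_near : ∀ᶠ r in 𝓝 ρ, e < harvestedPower ζ σ2 r P :=
    hcont.continuousAt.eventually_const_lt he
  obtain ⟨r, ⟨her, hr1⟩, hρr⟩ :=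
    (((he_near.and (eventually_lt_nhds hρ1)).filter_mono nhdsWithin_le_nhds).and
      (self_mem_nhdsWithin (s := Ioi ρ))).exists
  have hr0 : 0 < r := hρ0.trans hρr
  refine ⟨r, hr0, hr1, hs.trans_lt ?_, her⟩
  exact splittingSINR_strictMonoOn hσ hδ hP (mem_Ici.mpr hρ0.le) (mem_Ici.mpr hr0.le) hρr

theorem exists_lt_of_slack (hP : 0 < P) (hs : γ < splittingSINR σ2 δ2 ρ P)
    (he : e < harvestedPower ζ σ2 ρ P) :
    ∃ P', 0 ≤ P' ∧ P' < P ∧ γ ≤ splittingSINR σ2 δ2 ρ P' ∧ e ≤ harvestedPower ζ σ2 ρ P' := by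
  have hs_cont : Continuous fun p ↦ splittingSINR σ2 δ2 ρ p := by
    unfold splittingSINR
    fun_prop
  have he_cont : Continuous fun p ↦ harvestedPower ζ σ2 ρ p := by
    unfold harvestedPower
    fun_prop
  have hs_near : ∀ᶠ p in 𝓝 P, γ < splittingSINR σ2 δ2 ρ p :=
    hs_cont.continuousAt.eventually_const_lt hs
  have he_near : ∀ᶠ p in 𝓝 P, e < harvestedPower ζ σ2 ρ p :=
    he_cont.continuousAt.eventually_const_lt he
  obtain ⟨p, ⟨⟨hsp, hep⟩, hp0⟩, hpP⟩ :=
    ((((hs_near.and he_near).and (eventually_gt_nhds hP)).filter_mono nhdsWithin_le_nhds).and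
      (self_mem_nhdsWithin (s := Iio P))).exists
  exact ⟨p, hp0.le, hpP, hsp.le, hep.le⟩

end PowerSplitting

theorem sq_norm_ofReal_smul {E : Type*} [NormedAddCommGroup E] [NormedSpace ℂ E]
    (t : ℝ) (x : E) : ‖(t : ℂ) • x‖ ^ 2 = t ^ 2 * ‖x‖ ^ 2 := by
  rw [norm_smul, Complex.norm_real, Real.norm_eq_abs, mul_pow, sq_abs]

theorem sq_norm_inner_le_of_optimal {Nt : ℕ} {ι : Type*} {h : EuclideanSpace ℂ (Fin Nt)}
    {hj : ι → EuclideanSpace ℂ (Fin Nt)} {σ2 δ2 ζ γ e : ℝ} {v : EuclideanSpace ℂ (Fin Nt)}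
    (hopt : ∀ (v' : EuclideanSpace ℂ (Fin Nt)) (ρ' : ℝ),
      SUFeasible h hj σ2 δ2 ζ γ e v' ρ' → ‖v‖ ^ 2 ≤ ‖v'‖ ^ 2)
    (hv : v ≠ 0) (hzf : ∀ j, (inner ℂ (hj j) v : ℂ) = 0) {ρ' P' : ℝ} (hρ0 : 0 < ρ')
    (hρ1 : ρ' < 1) (hP' : 0 ≤ P') (hs : γ ≤ splittingSINR σ2 δ2 ρ' P')
    (he : e ≤ harvestedPower ζ σ2 ρ' P') :
    ‖(inner ℂ h v : ℂ)‖ ^ 2 ≤ P' := by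
  set P := ‖(inner ℂ h v : ℂ)‖ ^ 2
  by_contra! hlt
  have hP : 0 < P := hP'.trans_lt hlt
  set t := Real.sqrt (P' / P)
  have ht_sq : t ^ 2 = P' / P := Real.sq_sqrt (div_nonneg hP' hP.le)
  have ht_lt : t ^ 2 < 1 := by rwa [ht_sq, div_lt_one hP]
  have hPt : ‖(inner ℂ h ((t : ℂ) • v) : ℂ)‖ ^ 2 = P' := by
    rw [inner_smul_right, ← smul_eq_mul, sq_norm_ofReal_smul, ht_sq, div_mul_cancel₀ _ hP.ne']
  have hfeas : SUFeasible h hj σ2 δ2 ζ γ e ((t : ℂ) • v) ρ' := by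
    refine ⟨hρ0, hρ1, ?_, ?_, fun j ↦ by rw [inner_smul_right, hzf j, mul_zero]⟩
    · rwa [hPt]
    · rwa [hPt]
  have hle := hopt _ _ hfeas
  rw [sq_norm_ofReal_smul] at hle
  have hv2 : 0 < ‖v‖ ^ 2 := by positivity
  nlinarith

theorem single_user_zf_constraints_active_general (Nt : ℕ) {ι : Type*}
    (h : EuclideanSpace ℂ (Fin Nt)) (hj : ι → EuclideanSpace ℂ (Fin Nt))
    (σ2 δ2 ζ γ e : ℝ) (hσ : 0 ≤ σ2) (hδ : 0 < δ2) (hζ : 0 < ζ)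
    (hγ : 0 < γ)
    (v : EuclideanSpace ℂ (Fin Nt)) (ρ : ℝ)
    (hfeas : SUFeasible h hj σ2 δ2 ζ γ e v ρ)
    (hopt : ∀ (v' : EuclideanSpace ℂ (Fin Nt)) (ρ' : ℝ),
      SUFeasible h hj σ2 δ2 ζ γ e v' ρ' → ‖v‖ ^ 2 ≤ ‖v'‖ ^ 2) :
    ρ * ‖(inner ℂ h v : ℂ)‖ ^ 2 / (ρ * σ2 + δ2) = γ ∧
    ζ * (1 - ρ) * (‖(inner ℂ h v : ℂ)‖ ^ 2 + σ2) = e := by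
  obtain ⟨hρ0, hρ1, hs, he, hzf⟩ := hfeas
  change γ ≤ splittingSINR σ2 δ2 ρ _ at hs
  change e ≤ harvestedPower ζ σ2 ρ _ at he
  set P := ‖(inner ℂ h v : ℂ)‖ ^ 2
  have hP : 0 < P := pos_of_le_splittingSINR hγ (by positivity) hs
  have hv : v ≠ 0 := by
    rintro rfl
    simp [P] at hP
  have not_slack : ¬ ∃ ρ', 0 < ρ' ∧ ρ' < 1 ∧
      γ < splittingSINR σ2 δ2 ρ' P ∧ e < harvestedPower ζ σ2 ρ' P := by
    rintro ⟨ρ', hρ0', hρ1', hs', he'⟩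
    obtain ⟨P', hP'0, hP'P, hs'', he''⟩ := exists_lt_of_slack hP hs' he'
    exact hP'P.not_ge (sq_norm_inner_le_of_optimal hopt hv hzf hρ0' hρ1' hP'0 hs'' he'')
  constructor
  · by_contra hne
    exact not_slack (exists_slack_of_splittingSINR_slack hσ hδ hζ hP hρ0 hρ1
      (hs.lt_of_ne (Ne.symm hne)) he)
  · by_contra hne
    exact not_slack (exists_slack_of_harvestedPower_slack hσ hδ hP hρ0 hρ1 hs
      (he.lt_of_ne (Ne.symm hne)))

theorem single_user_zf_constraints_active (Nt : ℕ) {ι : Type*} [Fintype ι]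
    (h : EuclideanSpace ℂ (Fin Nt)) (hj : ι → EuclideanSpace ℂ (Fin Nt))
    (σ2 δ2 ζ γ e : ℝ) (hσ : 0 ≤ σ2) (hδ : 0 < δ2) (hζ : 0 < ζ)
    (hγ : 0 < γ) (he : 0 < e)
    (hproj :
      (Submodule.orthogonalProjectionOnto ((Submodule.span ℂ (Set.range hj))ᗮ) h :
        EuclideanSpace ℂ (Fin Nt)) ≠ 0)
    (v : EuclideanSpace ℂ (Fin Nt)) (ρ : ℝ)
    (hfeas : SUFeasible h hj σ2 δ2 ζ γ e v ρ)
    (hopt : ∀ (v' : EuclideanSpace ℂ (Fin Nt)) (ρ' : ℝ),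
      SUFeasible h hj σ2 δ2 ζ γ e v' ρ' → ‖v‖ ^ 2 ≤ ‖v'‖ ^ 2) :
    ρ * ‖(inner ℂ h v : ℂ)‖ ^ 2 / (ρ * σ2 + δ2) = γ ∧
    ζ * (1 - ρ) * (‖(inner ℂ h v : ℂ)‖ ^ 2 + σ2) = e :=
  single_user_zf_constraints_active_general Nt h hj σ2 δ2 ζ γ e hσ hδ hζ hγ v ρ hfeas hopt
end
end

section
/- Suppose v̂_1,…,v̂_K ∈ ℂ^{N_t} satisfy the SINR constraints with equality: |h_k^H v̂_k|²/(Σ_{j≠k}|h_k^H v̂_j|² + σ_k² + δ_k²) = γ_k for all k. Then the scaled problem is feasible: there exist α > 1 and ρ_1,…,ρ_K ∈ (0,1) such that SINR_k(√α·v̂, ρ) ≥ γ_k and E_k(√α·v̂, ρ) ≥ e_k for all k. Conversely, if the scaled problem is feasible for some v̂_1,…,v̂_K, then the JBPS problem is feasible. -/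
noncomputable section

open Finset

/-- The family `(√α v̂_1, …, √α v̂_K)`. -/
def scaled {K Nt : ℕ} (α : ℝ) (v : Fin K → EuclideanSpace ℂ (Fin Nt)) :
    Fin K → EuclideanSpace ℂ (Fin Nt) :=
  fun k => (Real.sqrt α : ℂ) • v k

/-!
Scaling every beamformer by `√α` multiplies all received signal powers by `α`. With the
splitting ratio `ρ = δ² / (α δ² + (α - 1) σ²)` the scaled SINR is exactly the unscaled one,
`γ_k`; this `ρ` lies in `(0, 1)` for `α > 1` and is at most `1/2` for `α ≥ 2`, so at least
half of the received power, which grows linearly in `α`, is harvested, and a large `α`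
meets all energy targets. The converse is immediate: take the scaled beamformers.
-/

open Filter

def splitRatio (α σ2 δ2 : ℝ) : ℝ := δ2 / (α * δ2 + (α - 1) * σ2)

section splitRatio

variable {α σ2 δ2 : ℝ}

lemma lt_splitRatio_denom (hα : 1 < α) (hσ : 0 ≤ σ2) (hδ : 0 < δ2) :
    δ2 < α * δ2 + (α - 1) * σ2 := by
  nlinarith

lemma splitRatio_pos (hα : 1 < α) (hσ : 0 ≤ σ2) (hδ : 0 < δ2) : 0 < splitRatio α σ2 δ2 :=
  div_pos hδ (hδ.trans (lt_splitRatio_denom hα hσ hδ))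

lemma splitRatio_lt_one (hα : 1 < α) (hσ : 0 ≤ σ2) (hδ : 0 < δ2) : splitRatio α σ2 δ2 < 1 :=
  (div_lt_one (hδ.trans (lt_splitRatio_denom hα hσ hδ))).2 (lt_splitRatio_denom hα hσ hδ)

lemma splitRatio_le_half (hα : 2 ≤ α) (hσ : 0 ≤ σ2) (hδ : 0 < δ2) :
    splitRatio α σ2 δ2 ≤ 1 / 2 := by
  have hden := hδ.trans (lt_splitRatio_denom (by linarith : (1 : ℝ) < α) hσ hδ)
  rw [splitRatio, div_le_div_iff₀ hden (by norm_num : (0 : ℝ) < 2)]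
  nlinarith

lemma splitRatio_mul_denom (hα : 1 < α) (hσ : 0 ≤ σ2) (hδ : 0 < δ2) :
    splitRatio α σ2 δ2 * (α * δ2 + (α - 1) * σ2) = δ2 :=
  div_mul_cancel₀ _ (hδ.trans (lt_splitRatio_denom hα hσ hδ)).ne'

lemma div_splitRatio_scaled (hα : 1 < α) (hσ : 0 ≤ σ2) (hδ : 0 < δ2) (S I : ℝ) :
    splitRatio α σ2 δ2 * (α * S) /
        (splitRatio α σ2 δ2 * (α * I) + splitRatio α σ2 δ2 * σ2 + δ2) =
      S / (I + σ2 + δ2) := by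
  have hρ := splitRatio_pos hα hσ hδ
  have hden : splitRatio α σ2 δ2 * (α * I) + splitRatio α σ2 δ2 * σ2 + δ2 =
      splitRatio α σ2 δ2 * α * (I + σ2 + δ2) := by
    linear_combination -(splitRatio_mul_denom hα hσ hδ)
  rw [hden, ← mul_assoc, mul_div_mul_left _ _ (mul_pos hρ (by linarith)).ne']

end splitRatio

section Beamforming

variable {K Nt : ℕ} (h v : Fin K → EuclideanSpace ℂ (Fin Nt)) {α : ℝ}

lemma norm_inner_scaled_sq (hα : 0 ≤ α) (k j : Fin K) :
    ‖(inner ℂ (h k) (scaled α v j) : ℂ)‖ ^ 2 = α * ‖(inner ℂ (h k) (v j) : ℂ)‖ ^ 2 := by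
  rw [scaled, inner_smul_right, norm_mul, mul_pow, Complex.norm_real, Real.norm_eq_abs, sq_abs,
    Real.sq_sqrt hα]

lemma SINR_scaled (σ2 δ2 : Fin K → ℝ) (ρ : Fin K → ℝ) (hα : 0 ≤ α) (k : Fin K) :
    SINR h σ2 δ2 (scaled α v) ρ k =
      ρ k * (α * ‖(inner ℂ (h k) (v k) : ℂ)‖ ^ 2) /
        (ρ k * (α * ∑ j ∈ univ.erase k, ‖(inner ℂ (h k) (v j) : ℂ)‖ ^ 2) + ρ k * σ2 k + δ2 k) := by
  simp only [SINR, norm_inner_scaled_sq h v hα, ← mul_sum]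

lemma EH_scaled (σ2 ζ : Fin K → ℝ) (ρ : Fin K → ℝ) (hα : 0 ≤ α) (k : Fin K) :
    EH h σ2 ζ (scaled α v) ρ k =
      ζ k * (1 - ρ k) * (α * ∑ j, ‖(inner ℂ (h k) (v j) : ℂ)‖ ^ 2 + σ2 k) := by
  simp only [EH, norm_inner_scaled_sq h v hα, ← mul_sum]

lemma sum_norm_inner_sq_pos_of_div_pos {D : ℝ} {k : Fin K}
    (hpos : 0 < ‖(inner ℂ (h k) (v k) : ℂ)‖ ^ 2 / D) :
    0 < ∑ j, ‖(inner ℂ (h k) (v j) : ℂ)‖ ^ 2 := by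
  have hsignal : 0 < ‖(inner ℂ (h k) (v k) : ℂ)‖ ^ 2 :=
    (sq_nonneg _).lt_of_ne fun h0 => by simp [← h0] at hpos
  exact hsignal.trans_le <| single_le_sum (f := fun j => ‖(inner ℂ (h k) (v j) : ℂ)‖ ^ 2)
    (fun j _ => by positivity) (mem_univ k)

end Beamforming

lemma eventually_le_harvested {ζ T σ2 e : ℝ} (hζ : 0 < ζ) (hT : 0 < T) (hσ : 0 ≤ σ2)
    (ρ : ℝ → ℝ) (hρ : ∀ᶠ α in atTop, ρ α ≤ 1 / 2) :
    ∀ᶠ α in atTop, e ≤ ζ * (1 - ρ α) * (α * T + σ2) := by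
  filter_upwards [hρ, eventually_ge_atTop (2 * e / (ζ * T)), eventually_ge_atTop 0]
    with α hρα hαe hα0
  have hζT : 0 < ζ * T := mul_pos hζ hT
  have hαT : 2 * e ≤ α * (ζ * T) := (div_le_iff₀ hζT).1 hαe
  nlinarith [mul_nonneg hζ.le (mul_nonneg hα0 hT.le), mul_nonneg hζ.le hσ]

theorem scaled_problem_feasibility_general (K Nt : ℕ)
    (h : Fin K → EuclideanSpace ℂ (Fin Nt)) (σ2 δ2 ζ γ e : Fin K → ℝ)
    (hσ : ∀ k, 0 < σ2 k) (hδ : ∀ k, 0 < δ2 k)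
    (hζ : ∀ k, 0 < ζ k ∧ ζ k ≤ 1) (hγ : ∀ k, 0 < γ k)
    (vh : Fin K → EuclideanSpace ℂ (Fin Nt))
    (heq : ∀ k, ‖(inner ℂ (h k) (vh k) : ℂ)‖ ^ 2 /
      ((∑ j ∈ univ.erase k, ‖(inner ℂ (h k) (vh j) : ℂ)‖ ^ 2) + σ2 k + δ2 k) = γ k) :
    (∃ (α : ℝ) (ρ : Fin K → ℝ), 1 < α ∧ (∀ k, 0 < ρ k ∧ ρ k < 1) ∧
      (∀ k, γ k ≤ SINR h σ2 δ2 (scaled α vh) ρ k) ∧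
      (∀ k, e k ≤ EH h σ2 ζ (scaled α vh) ρ k)) ∧
    (∀ w : Fin K → EuclideanSpace ℂ (Fin Nt),
      (∃ (α : ℝ) (ρ : Fin K → ℝ), 1 < α ∧ (∀ k, 0 < ρ k ∧ ρ k < 1) ∧
        (∀ k, γ k ≤ SINR h σ2 δ2 (scaled α w) ρ k) ∧
        (∀ k, e k ≤ EH h σ2 ζ (scaled α w) ρ k)) →
      ∃ (v : Fin K → EuclideanSpace ℂ (Fin Nt)) (ρ : Fin K → ℝ),
        (∀ k, 0 < ρ k ∧ ρ k < 1) ∧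
        (∀ k, γ k ≤ SINR h σ2 δ2 v ρ k) ∧
        (∀ k, e k ≤ EH h σ2 ζ v ρ k)) := by
  refine ⟨?_, fun w ⟨α, ρ, _, hρ, hSINR, hEH⟩ => ⟨scaled α w, ρ, hρ, hSINR, hEH⟩⟩
  let ρ : ℝ → Fin K → ℝ := fun α k => splitRatio α (σ2 k) (δ2 k)
  have hpow_pos (k : Fin K) : 0 < ∑ j, ‖(inner ℂ (h k) (vh j) : ℂ)‖ ^ 2 :=
    sum_norm_inner_sq_pos_of_div_pos h vh (heq k ▸ hγ k)
  have hEH : ∀ᶠ α in atTop, ∀ k, e k ≤ EH h σ2 ζ (scaled α vh) (ρ α) k := by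
    refine eventually_all.2 fun k => ?_
    filter_upwards [eventually_le_harvested (hζ k).1 (hpow_pos k) (hσ k).le (ρ · k)
      ((eventually_ge_atTop 2).mono fun α hα => splitRatio_le_half hα (hσ k).le (hδ k)),
      eventually_ge_atTop 0] with α hαe hα0
    rwa [EH_scaled h vh σ2 ζ _ hα0]
  obtain ⟨α, hα, hEHα⟩ := ((eventually_gt_atTop 1).and hEH).exists
  refine ⟨α, ρ α, hα, fun k => ⟨splitRatio_pos hα (hσ k).le (hδ k),
    splitRatio_lt_one hα (hσ k).le (hδ k)⟩, fun k => ?_, hEHα⟩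
  rw [SINR_scaled h vh σ2 δ2 _ (by linarith), div_splitRatio_scaled hα (hσ k).le (hδ k), heq k]

theorem scaled_problem_feasibility (K Nt : ℕ) (hK : 1 ≤ K) (hNt : 1 ≤ Nt)
    (h : Fin K → EuclideanSpace ℂ (Fin Nt)) (σ2 δ2 ζ γ e : Fin K → ℝ)
    (hσ : ∀ k, 0 < σ2 k) (hδ : ∀ k, 0 < δ2 k)
    (hζ : ∀ k, 0 < ζ k ∧ ζ k ≤ 1) (hγ : ∀ k, 0 < γ k) (he : ∀ k, 0 < e k)
    (vh : Fin K → EuclideanSpace ℂ (Fin Nt))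
    (heq : ∀ k, ‖(inner ℂ (h k) (vh k) : ℂ)‖ ^ 2 /
      ((∑ j ∈ univ.erase k, ‖(inner ℂ (h k) (vh j) : ℂ)‖ ^ 2) + σ2 k + δ2 k) = γ k) :
    (∃ (α : ℝ) (ρ : Fin K → ℝ), 1 < α ∧ (∀ k, 0 < ρ k ∧ ρ k < 1) ∧
      (∀ k, γ k ≤ SINR h σ2 δ2 (scaled α vh) ρ k) ∧
      (∀ k, e k ≤ EH h σ2 ζ (scaled α vh) ρ k)) ∧
    (∀ w : Fin K → EuclideanSpace ℂ (Fin Nt),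
      (∃ (α : ℝ) (ρ : Fin K → ℝ), 1 < α ∧ (∀ k, 0 < ρ k ∧ ρ k < 1) ∧
        (∀ k, γ k ≤ SINR h σ2 δ2 (scaled α w) ρ k) ∧
        (∀ k, e k ≤ EH h σ2 ζ (scaled α w) ρ k)) →
      ∃ (v : Fin K → EuclideanSpace ℂ (Fin Nt)) (ρ : Fin K → ℝ),
        (∀ k, 0 < ρ k ∧ ρ k < 1) ∧
        (∀ k, γ k ≤ SINR h σ2 δ2 v ρ k) ∧
        (∀ k, e k ≤ EH h σ2 ζ v ρ k)) :=
  scaled_problem_feasibility_general K Nt h σ2 δ2 ζ γ e hσ hδ hζ hγ vh heq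
end
end

section
/- If K ≤ N_t and h_1,…,h_K ∈ ℂ^{N_t} are linearly independent, then the ZF problem is feasible: there exist v_1,…,v_K ∈ ℂ^{N_t} and ρ_1,…,ρ_K ∈ (0,1) with ρ_k|h_k^H v_k|²/(ρ_k σ_k² + δ_k²) ≥ γ_k, ζ_k(1−ρ_k)(|h_k^H v_k|² + σ_k²) ≥ e_k, and h_j^H v_k = 0 for all j ≠ k. -/
/-! Linear independence of the channels gives, for each user `k`, a vector orthogonal to every
other channel but not to `h k`: the component of `h k` orthogonal to the span of the others.
Zero forcing fixes only these beam directions. With the power split fixed at `ρ = 1/2`, both the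
SINR and the harvested power grow without bound in the beam amplitude, so a large enough
amplitude meets every target. -/

open Filter

section Biorthogonal

variable {𝕜 E : Type*} [RCLike 𝕜] [NormedAddCommGroup E] [InnerProductSpace 𝕜 E]

local notation "⟪" x ", " y "⟫" => inner 𝕜 x y

theorem Submodule.exists_mem_orthogonal_inner_eq_one (K : Submodule 𝕜 E)
    [K.HasOrthogonalProjection] {x : E} (hx : x ∉ K) : ∃ u ∈ Kᗮ, ⟪x, u⟫ = 1 := by
  set w := x - K.starProjection x
  have hw : w ∈ Kᗮ := K.sub_starProjection_mem_orthogonal x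
  have hw_ne : w ≠ 0 := fun h0 ↦ hx (K.starProjection_eq_self_iff.mp (sub_eq_zero.mp h0).symm)
  have hxw : ⟪x, w⟫ = ⟪w, w⟫ := by
    have hproj : ⟪K.starProjection x, w⟫ = 0 :=
      K.inner_right_of_mem_orthogonal (K.starProjection_apply_mem x) hw
    rw [← sub_zero ⟪x, w⟫, ← hproj, ← inner_sub_left]
  refine ⟨⟪w, w⟫⁻¹ • w, K.orthogonal.smul_mem _ hw, ?_⟩
  rw [inner_smul_right, hxw, inv_mul_cancel₀ (inner_self_ne_zero.mpr hw_ne)]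

theorem LinearIndependent.exists_inner_eq_ite {ι : Type*} [Finite ι] [DecidableEq ι]
    {h : ι → E} (hli : LinearIndependent 𝕜 h) :
    ∃ u : ι → E, ∀ j k, ⟪h j, u k⟫ = if j = k then 1 else 0 := by
  have key : ∀ k, ∃ u : E, ∀ j, ⟪h j, u⟫ = if j = k then 1 else 0 := by
    intro k
    set S := Submodule.span 𝕜 (h '' {j | j ≠ k})
    have : FiniteDimensional 𝕜 S := FiniteDimensional.span_of_finite 𝕜 ((Set.toFinite _).image h)
    obtain ⟨u, hu_orth, hu_one⟩ :=
      S.exists_mem_orthogonal_inner_eq_one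
        (hli.notMem_span_image (s := {j | j ≠ k}) (x := k) fun hk ↦ hk rfl)
    refine ⟨u, fun j ↦ ?_⟩
    split_ifs with hjk
    · rw [hjk, hu_one]
    · exact S.inner_right_of_mem_orthogonal (Submodule.subset_span ⟨j, hjk, rfl⟩) hu_orth
  choose u hu using key
  exact ⟨u, fun j k ↦ hu k j⟩

end Biorthogonal

theorem eventually_sinr_ge_and_harvest_ge {ρ σ2 δ2 ζ : ℝ} (γ e : ℝ) (hρ : 0 < ρ ∧ ρ < 1)
    (hden : 0 < ρ * σ2 + δ2) (hζ : 0 < ζ) :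
    ∀ᶠ g in atTop, γ ≤ ρ * g / (ρ * σ2 + δ2) ∧ e ≤ ζ * (1 - ρ) * (g + σ2) := by
  have hsinr : Tendsto (fun g ↦ ρ * g / (ρ * σ2 + δ2)) atTop atTop :=
    (tendsto_id.const_mul_atTop hρ.1).atTop_div_const hden
  have hharvest : Tendsto (fun g ↦ ζ * (1 - ρ) * (g + σ2)) atTop atTop :=
    (tendsto_atTop_add_const_right _ σ2 tendsto_id).const_mul_atTop
      (mul_pos hζ (sub_pos.mpr hρ.2))
  exact (hsinr.eventually_ge_atTop γ).and (hharvest.eventually_ge_atTop e)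

theorem zf_problem_feasible_of_linearIndependent_general (K Nt : ℕ)
    (h : Fin K → EuclideanSpace ℂ (Fin Nt)) (hli : LinearIndependent ℂ h)
    (σ2 δ2 ζ γ e : Fin K → ℝ)
    (hσ : ∀ k, 0 < σ2 k) (hδ : ∀ k, 0 < δ2 k)
    (hζ : ∀ k, 0 < ζ k ∧ ζ k ≤ 1) :
    ∃ (v : Fin K → EuclideanSpace ℂ (Fin Nt)) (ρ : Fin K → ℝ),
      (∀ k, 0 < ρ k ∧ ρ k < 1) ∧
      (∀ k, γ k ≤ ρ k * ‖(inner ℂ (h k) (v k) : ℂ)‖ ^ 2 / (ρ k * σ2 k + δ2 k)) ∧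
      (∀ k, e k ≤ ζ k * (1 - ρ k) * (‖(inner ℂ (h k) (v k) : ℂ)‖ ^ 2 + σ2 k)) ∧
      (∀ k, ∀ j, j ≠ k → (inner ℂ (h j) (v k) : ℂ) = 0) := by
  obtain ⟨u, hu⟩ := hli.exists_inner_eq_ite
  have hρ : (0 : ℝ) < 1 / 2 ∧ (1 / 2 : ℝ) < 1 := by norm_num
  have hamp : ∀ k, ∃ c : ℝ, γ k ≤ 1 / 2 * c ^ 2 / (1 / 2 * σ2 k + δ2 k) ∧
      e k ≤ ζ k * (1 - 1 / 2) * (c ^ 2 + σ2 k) := fun k ↦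
    ((tendsto_pow_atTop two_ne_zero).eventually (eventually_sinr_ge_and_harvest_ge (γ k) (e k) hρ
      (by linarith [hσ k, hδ k]) (hζ k).1)).exists
  choose c hc using hamp
  have hinner : ∀ j k, inner ℂ (h j) ((c k : ℂ) • u k) = if j = k then (c k : ℂ) else 0 := by
    intro j k
    rw [inner_smul_right, hu]
    split_ifs <;> simp
  have hgain : ∀ k, ‖inner ℂ (h k) ((c k : ℂ) • u k)‖ ^ 2 = c k ^ 2 := by
    intro k
    rw [hinner, if_pos rfl, Complex.norm_real, Real.norm_eq_abs, sq_abs]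
  refine ⟨fun k ↦ (c k : ℂ) • u k, fun _ ↦ 1 / 2, fun _ ↦ hρ, fun k ↦ ?_, fun k ↦ ?_,
    fun k j hjk ↦ by rw [hinner, if_neg hjk]⟩
  · rw [hgain]; exact (hc k).1
  · rw [hgain]; exact (hc k).2

theorem zf_problem_feasible_of_linearIndependent (K Nt : ℕ) (hKNt : K ≤ Nt)
    (h : Fin K → EuclideanSpace ℂ (Fin Nt)) (hli : LinearIndependent ℂ h)
    (σ2 δ2 ζ γ e : Fin K → ℝ)
    (hσ : ∀ k, 0 < σ2 k) (hδ : ∀ k, 0 < δ2 k)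
    (hζ : ∀ k, 0 < ζ k ∧ ζ k ≤ 1) (hγ : ∀ k, 0 < γ k) (he : ∀ k, 0 < e k) :
    ∃ (v : Fin K → EuclideanSpace ℂ (Fin Nt)) (ρ : Fin K → ℝ),
      (∀ k, 0 < ρ k ∧ ρ k < 1) ∧
      (∀ k, γ k ≤ ρ k * ‖(inner ℂ (h k) (v k) : ℂ)‖ ^ 2 / (ρ k * σ2 k + δ2 k)) ∧
      (∀ k, e k ≤ ζ k * (1 - ρ k) * (‖(inner ℂ (h k) (v k) : ℂ)‖ ^ 2 + σ2 k)) ∧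
      (∀ k, ∀ j, j ≠ k → (inner ℂ (h j) (v k) : ℂ) = 0) :=
  zf_problem_feasible_of_linearIndependent_general K Nt h hli σ2 δ2 ζ γ e hσ hδ hζ
end

section
/- Let h_1,…,h_K ∈ ℂ^N, let c_1,…,c_K be real numbers, and set B = I_N + Σ_{j=1}^K c_j h_j h_j^H. Suppose B is positive semidefinite and for every k there exists t_k > 0 such that B − t_k h_k h_k^H is positive semidefinite. Then B is positive definite. -/
/-! If `xᴴ B x = 0`, then `0 ≤ xᴴ (B - t_k h_k h_kᴴ) x = -t_k |h_kᴴ x|²` forces `x ⟂ h_k` for every `k`.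
Hence `B x = x`, so `0 = xᴴ B x = ‖x‖²` and `x = 0`. -/

noncomputable section

open Matrix
open scoped ComplexOrder

namespace Matrix

section RCLike

variable {n 𝕜 : Type*} [Fintype n] [RCLike 𝕜]

lemma star_dotProduct_vecMulVec_self_star_mulVec (u x : n → 𝕜) :
    star x ⬝ᵥ (vecMulVec u (star u) *ᵥ x) = star (star u ⬝ᵥ x) * (star u ⬝ᵥ x) := by
  rw [vecMulVec_mulVec, dotProduct_smul, star_dotProduct x u, op_smul_eq_mul]

lemma PosSemidef.dotProduct_eq_zero_of_sub_smul_vecMulVec {A : Matrix n n 𝕜} {t : 𝕜} {u x : n → 𝕜}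
    (hA : (A - t • vecMulVec u (star u)).PosSemidef) (ht : 0 < t)
    (hx : star x ⬝ᵥ (A *ᵥ x) = 0) : star u ⬝ᵥ x = 0 := by
  have hle : t * (star (star u ⬝ᵥ x) * (star u ⬝ᵥ x)) ≤ 0 := by
    simpa [sub_mulVec, dotProduct_sub, hx, smul_mulVec, dotProduct_smul,
      star_dotProduct_vecMulVec_self_star_mulVec] using hA.dotProduct_mulVec_nonneg x
  have hzero := le_antisymm hle (mul_nonneg ht.le (star_mul_self_nonneg _))
  exact (CStarRing.star_mul_self_eq_zero_iff _).mp ((mul_eq_zero.mp hzero).resolve_left ht.ne')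

end RCLike

lemma sum_smul_vecMulVec_mulVec_eq_zero {n ι α : Type*} [Fintype n] [Semiring α]
    (s : Finset ι) (c : ι → α) (u v : ι → n → α) {x : n → α} (hx : ∀ j ∈ s, v j ⬝ᵥ x = 0) :
    (∑ j ∈ s, c j • vecMulVec (u j) (v j)) *ᵥ x = 0 := by
  rw [sum_mulVec]
  refine Finset.sum_eq_zero fun j hj => ?_
  rw [smul_mulVec, vecMulVec_mulVec, hx j hj, MulOpposite.op_zero, zero_smul, smul_zero]

end Matrix

theorem posDef_of_rank_one_perturbations (N K : ℕ)
    (h : Fin K → (Fin N → ℂ)) (c : Fin K → ℝ)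
    (B : Matrix (Fin N) (Fin N) ℂ)
    (hB : B = 1 + ∑ j, (c j : ℂ) • vecMulVec (h j) (star (h j)))
    (hBpsd : B.PosSemidef)
    (hpert : ∀ k, ∃ t : ℝ, 0 < t ∧
      (B - (t : ℂ) • vecMulVec (h k) (star (h k))).PosSemidef) :
    B.PosDef := by
  refine posDef_iff_dotProduct_mulVec.mpr ⟨hBpsd.1, fun x hx => ?_⟩
  refine lt_of_le_of_ne' (hBpsd.dotProduct_mulVec_nonneg x) fun hq => hx ?_
  have horth : ∀ k, star (h k) ⬝ᵥ x = 0 := fun k =>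
    let ⟨_, ht, hpsd⟩ := hpert k
    hpsd.dotProduct_eq_zero_of_sub_smul_vecMulVec (Complex.zero_lt_real.mpr ht) hq
  have hBx : B *ᵥ x = x := by
    rw [hB, add_mulVec, one_mulVec,
      sum_smul_vecMulVec_mulVec_eq_zero _ _ _ _ fun k _ => horth k, add_zero]
  rwa [hBx, dotProduct_star_self_eq_zero] at hq
end
end
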